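/- Let K be a field of characteristic zero and ∂ : K → K a derivation. Define φ*_∂ = σ ∘ exp(z∂) : K → K[[t−1]] where σ substitutes log(t) for z. Then ev₁ ∘ (d/dt) ∘ φ*_∂ = ∂, i.e. the coefficient of (t−1)¹ in φ*_∂(f) equals ∂(f) for every f ∈ K. -/

import Mathlib

/-- The exponential map `exp(z∂) : f ↦ ∑ ∂^i(f) zⁱ/i!`. -/
noncomputable def expS {K : Type*} [Field K] (d : K → K) (f : K) : PowerSeries K :=
  PowerSeries.mk fun i => (i.factorial : K)⁻¹ * (d^[i] f)

/-- The logarithm series `log(1+u) = ∑_{i≥1} (-1)^{i+1} uⁱ/i`. -/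
noncomputable def logS (K : Type*) [Field K] : PowerSeries K :=
  PowerSeries.mk fun i => if i = 0 then 0 else (-1 : K) ^ (i + 1) * (i : K)⁻¹

/-- Formal substitution `f(g(z))` of a power series `g` with zero constant term into `f`. -/
noncomputable def comp {K : Type*} [Field K] (f g : PowerSeries K) : PowerSeries K :=
  PowerSeries.mk fun n => ∑ i ∈ Finset.range (n + 1),
    PowerSeries.coeff i f * PowerSeries.coeff n (g ^ i)

/-- The formal derivative `d/dz` on `K[[z]]`. -/
noncomputable def derivS {K : Type*} [Field K] (f : PowerSeries K) : PowerSeries K :=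
  PowerSeries.mk fun n => ((n : K) + 1) * PowerSeries.coeff (n + 1) f

/-- For a derivation `∂` of `K` and `φ*_∂ = σ ∘ exp(z∂) : K → K[[t-1]]`, we have
`ev₁ ∘ (d/dt) ∘ φ*_∂ = ∂`, i.e. the coefficient of `(t-1)¹` in `φ*_∂(f)` is `∂(f)`. -/
theorem stmt_10 {K : Type*} [Field K] [CharZero K] (d : Derivation ℚ K K) :
    ∀ f : K,
      PowerSeries.constantCoeff (derivS (comp (expS (⇑d) f) (logS K))) = d f ∧
      PowerSeries.coeff 1 (comp (expS (⇑d) f) (logS K)) = d f := by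
  intro f
  have h1 : PowerSeries.coeff 1 (comp (expS (⇑d) f) (logS K)) = d f := by
    simp [comp, expS, logS, Finset.sum_range_succ, PowerSeries.coeff_one,
      PowerSeries.coeff_mk, pow_one, Function.iterate_one]
  refine ⟨?_, h1⟩
  have : PowerSeries.constantCoeff (derivS (comp (expS (⇑d) f) (logS K))) =
      PowerSeries.coeff 1 (comp (expS (⇑d) f) (logS K)) := by
    simp [derivS, PowerSeries.coeff_zero_eq_constantCoeff.symm]
  rw [this, h1]
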